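/- arXiv:0710.2748 — 2 statements merged into one kernel-verified Lean document; each statement's English description precedes it below -/
import Mathlib

section
/- Suppose q = 1 (so that, by the standing assumption, K has characteristic 0, and D_1 is the operator with (D_1 a)(n) = (n+1)·a(n+1)). Let α ∈ K be nonzero, let s ≥ 1, and fix a Jordan chain (Ψ_{α,r})_{r≥1} at α. Then D_1 Ψ_{α,s} + s·Ψ_{α,s+1} lies in the K-linear span of {Ψ_{α,r} : 1 ≤ r ≤ s}. -/
open Polynomial
open scoped Classical

noncomputable section

/-- The q-integer {n}_q. -/
def qInt (K : Type*) [Field K] (q : K) (n : ℤ) : K :=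
  if q = 1 then (n : K) else (q ^ n - 1) / (q - 1)

/-- The multiplication operator `M` on formal Laurent series `L = ℤ → K`:
`(M a)(n) = a(n-1)`. -/
def Mop (K : Type*) [Field K] : Module.End K (ℤ → K) where
  toFun a := fun n => a (n - 1)
  map_add' _ _ := rfl
  map_smul' _ _ := rfl

/-- The q-difference operator `D_q` on `L = ℤ → K`: `(D_q a)(n) = {n+1}_q · a(n+1)`. -/
def Dq (K : Type*) [Field K] (q : K) : Module.End K (ℤ → K) where
  toFun a := fun n => qInt K q (n + 1) * a (n + 1)
  map_add' x y := by funext n; simp [Pi.add_apply, mul_add]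
  map_smul' c x := by funext n; simp [Pi.smul_apply, smul_eq_mul]; ring

/-- The element `Ψ_{α,1} ∈ L`, `Ψ_{α,1}(n) = α^{-n}`. -/
def Psi1 (K : Type*) [Field K] (α : K) : ℤ → K := fun n => α ^ (-n)

/-- A Jordan chain at `α`: a sequence `(Ψ_{α,s})_{s ≥ 1}` with first term `Ψ_{α,1}`
and `(M - α·id) Ψ_{α,s} = Ψ_{α,s-1}` for `s ≥ 2`. -/
def IsJordanChain (K : Type*) [Field K] (α : K) (Ψ : ℕ → ℤ → K) : Prop :=
  Ψ 1 = Psi1 K α ∧ ∀ s : ℕ, 2 ≤ s → Mop K (Ψ s) - α • Ψ s = Ψ (s - 1)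

/-! For `q = 1` the operators satisfy the Weyl relation `D M - M D = 1`, so `T = M - α`
satisfies `T D = D T - 1`. With `X_s = D Ψ_s + s Ψ_{s+1}` this gives `T X_1 = 0` and
`T X_{s+1} = X_s`. Since `T` maps `Ψ_{r+1}` to `Ψ_r` and, for `α ≠ 0`, has kernel `K Ψ_1`,
induction on `s` puts `X_s` in the span of `Ψ_1, …, Ψ_s`. -/

section JordanChainSpan

variable {R V : Type*} [Ring R] [AddCommGroup V] [Module R V]

theorem mem_span_image_Icc_of_apply_succ (T : Module.End R V) {v x : ℕ → V}
    (hker : LinearMap.ker T ≤ R ∙ v 1) (hv : ∀ r, 1 ≤ r → T (v (r + 1)) = v r)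
    (hx₁ : T (x 1) = 0) (hx : ∀ s, 1 ≤ s → T (x (s + 1)) = x s) {s : ℕ} (hs : 1 ≤ s) :
    x s ∈ Submodule.span R (v '' Set.Icc 1 s) := by
  induction s, hs using Nat.le_induction with
  | base =>
    rw [Set.Icc_self, Set.image_singleton]
    exact hker hx₁
  | succ s hs ih =>
    set W := Submodule.span R (v '' Set.Icc 1 (s + 1))
    have hker_le : LinearMap.ker T ≤ W :=
      hker.trans (Submodule.span_mono (Set.singleton_subset_iff.2 ⟨1, ⟨le_rfl, by omega⟩, rfl⟩))
    have hmap : Submodule.span R (v '' Set.Icc 1 s) ≤ W.map T := by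
      rw [Submodule.map_span]
      refine Submodule.span_mono ?_
      rintro _ ⟨r, ⟨hr₁, hrs⟩, rfl⟩
      exact ⟨v (r + 1), ⟨r + 1, ⟨by omega, by omega⟩, rfl⟩, hv r hr₁⟩
    -- `T x ∈ T W` only gives `x ∈ W + ker T`, and `ker T` already lies in `W`.
    rw [← sup_eq_left.2 hker_le, ← Submodule.comap_map_eq, Submodule.mem_comap, hx s hs]
    exact hmap ih

end JordanChainSpan

section LaurentOperators

variable {K : Type*} [Field K]

theorem Mop_apply (a : ℤ → K) (n : ℤ) : Mop K a n = a (n - 1) := rfl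

theorem Dq_one_apply (a : ℤ → K) (n : ℤ) : Dq K 1 a n = (n + 1) * a (n + 1) := by
  simp [Dq, qInt]

theorem Dq_one_mul_Mop_sub_Mop_mul_Dq_one : Dq K 1 * Mop K - Mop K * Dq K 1 = 1 := by
  ext a n
  simp only [LinearMap.sub_apply, Module.End.mul_apply, Module.End.one_apply, Pi.sub_apply,
    Dq_one_apply, Mop_apply, add_sub_cancel_right, sub_add_cancel, Int.cast_sub, Int.cast_one]
  ring

theorem Mop_sub_smul_mul_Dq_one (α : K) :
    (Mop K - α • 1) * Dq K 1 = Dq K 1 * (Mop K - α • 1) - 1 := by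
  rw [sub_mul, mul_sub, smul_mul_assoc, mul_smul_comm, one_mul, mul_one,
    ← Dq_one_mul_Mop_sub_Mop_mul_Dq_one]
  abel

theorem Mop_sub_smul_Dq_one_add_smul (α c : K) {a b : ℤ → K} (hb : (Mop K - α • 1) b = a) :
    (Mop K - α • 1) (Dq K 1 a + c • b) = Dq K 1 ((Mop K - α • 1) a) + (c - 1) • a := by
  rw [map_add, map_smul, hb, ← Module.End.mul_apply, Mop_sub_smul_mul_Dq_one]
  simp only [LinearMap.sub_apply, Module.End.mul_apply, Module.End.one_apply]
  module

theorem Mop_sub_smul_Psi1 {α : K} (hα : α ≠ 0) : (Mop K - α • 1) (Psi1 K α) = 0 := by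
  funext n
  simp only [LinearMap.sub_apply, LinearMap.smul_apply, Module.End.one_apply, Mop_apply,
    Psi1, Pi.sub_apply, Pi.smul_apply, smul_eq_mul, Pi.zero_apply]
  rw [show -(n - 1) = -n + 1 by ring, zpow_add_one₀ hα, mul_comm, sub_self]

theorem ker_Mop_sub_smul_le {α : K} (hα : α ≠ 0) :
    LinearMap.ker (Mop K - α • 1) ≤ K ∙ Psi1 K α := by
  intro a ha
  have hrec : ∀ n : ℤ, a n = α * a (n + 1) := fun n => by
    simpa [Mop_apply, sub_eq_zero] using congrFun ha (n + 1)
  have hconst : Function.Periodic (fun n : ℤ => α ^ n * a n) 1 := fun n => by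
    simp only [hrec n, zpow_add_one₀ hα]
    ring
  refine Submodule.mem_span_singleton.2 ⟨a 0, funext fun n => ?_⟩
  have := hconst.int_mul_eq n
  simp only [Int.cast_id, mul_one, zpow_zero, one_mul] at this
  rw [Pi.smul_apply, Psi1, smul_eq_mul, ← this, zpow_neg, mul_comm (α ^ n),
    mul_inv_cancel_right₀ (zpow_ne_zero n hα)]

namespace IsJordanChain

variable {α : K} {Ψ : ℕ → ℤ → K}

theorem Mop_sub_smul_apply_succ (hΨ : IsJordanChain K α Ψ) {r : ℕ} (hr : 1 ≤ r) :
    (Mop K - α • 1) (Ψ (r + 1)) = Ψ r := by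
  simpa using hΨ.2 (r + 1) (by omega)

theorem Mop_sub_smul_apply_one (hΨ : IsJordanChain K α Ψ) (hα : α ≠ 0) :
    (Mop K - α • 1) (Ψ 1) = 0 := by
  rw [hΨ.1, Mop_sub_smul_Psi1 hα]

end IsJordanChain

end LaurentOperators

theorem D1_Psi_s_general (K : Type*) [Field K]
    (α : K) (hα : α ≠ 0) (s : ℕ) (hs : 1 ≤ s)
    (Ψ : ℕ → ℤ → K) (hΨ : IsJordanChain K α Ψ) :
    Dq K 1 (Ψ s) + (s : K) • Ψ (s + 1) ∈
      Submodule.span K (Ψ '' {r : ℕ | 1 ≤ r ∧ r ≤ s}) := by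
  refine mem_span_image_Icc_of_apply_succ (Mop K - α • 1)
    (x := fun s => Dq K 1 (Ψ s) + (s : K) • Ψ (s + 1))
    (hΨ.1 ▸ ker_Mop_sub_smul_le hα) (fun r hr => hΨ.Mop_sub_smul_apply_succ hr) ?_ ?_ hs
  · rw [Mop_sub_smul_Dq_one_add_smul α _ (hΨ.Mop_sub_smul_apply_succ le_rfl),
      hΨ.Mop_sub_smul_apply_one hα]
    simp
  · intro s hs
    rw [Mop_sub_smul_Dq_one_add_smul α _ (hΨ.Mop_sub_smul_apply_succ (by omega)),
      hΨ.Mop_sub_smul_apply_succ hs]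
    push_cast
    rw [add_sub_cancel_right]

/-- for `q = 1`, `D_1 Ψ_{α,s} + s·Ψ_{α,s+1}` lies in the span of
`{Ψ_{α,r} : 1 ≤ r ≤ s}`. -/
theorem D1_Psi_s (K : Type*) [Field K]
    (hqi : ∀ n : ℤ, n ≠ 0 → qInt K (1 : K) n ≠ 0)
    (α : K) (hα : α ≠ 0) (s : ℕ) (hs : 1 ≤ s)
    (Ψ : ℕ → ℤ → K) (hΨ : IsJordanChain K α Ψ) :
    Dq K 1 (Ψ s) + (s : K) • Ψ (s + 1) ∈
      Submodule.span K (Ψ '' {r : ℕ | 1 ≤ r ∧ r ≤ s}) :=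
  D1_Psi_s_general K α hα s hs Ψ hΨ
end
end

section
/- For every integer j ≥ 0 there exists a polynomial r_j ∈ K[X] of degree exactly j (with coefficients lying in the subring generated by q and q^{−1}) such that for every k ∈ ℤ one has {k}_q · {k−1}_q ⋯ {k−j+1}_q = r_j({k}_q), the left-hand side being the empty product 1 when j = 0. -/
open Polynomial
open scoped Classical

noncomputable section

/-! Since `{k - i}_q = q⁻ⁱ ({k}_q - {i}_q)`, the product `{k}_q {k-1}_q ⋯ {k-j+1}_q` is the value at
`{k}_q` of the product of the `j` linear polynomials `q⁻ⁱ (X - {i}_q)`, a q-analogue of the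
descending Pochhammer polynomial. Its coefficients lie in any subring containing `q` and `q⁻¹`
because each `{i}_q = 1 + q + ⋯ + q^(i-1)` does. -/

section QDescPochhammer

variable {K : Type*} [Field K] {q : K}

lemma qInt_natCast (q : K) (n : ℕ) : qInt K q n = ∑ m ∈ Finset.range n, q ^ m := by
  unfold qInt
  split_ifs with h
  · simp [h]
  · rw [geom_sum_eq h, zpow_natCast]

lemma qInt_natCast_mem {S : Subring K} (hqS : q ∈ S) (n : ℕ) : qInt K q n ∈ S := by
  rw [qInt_natCast]
  exact S.sum_mem fun m _ => S.pow_mem hqS m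

lemma qInt_sub (hq : q ≠ 0) (k m : ℤ) :
    qInt K q (k - m) = (q ^ m)⁻¹ * (qInt K q k - qInt K q m) := by
  unfold qInt
  split_ifs with h
  · simp [h]
  · have : q - 1 ≠ 0 := sub_ne_zero.mpr h
    rw [zpow_sub₀ hq]
    field_simp
    ring

variable (K q) in
def qDescPochhammer (j : ℕ) : K[X] :=
  ∏ i ∈ Finset.range j, C (q ^ i)⁻¹ * (X - C (qInt K q i))

lemma degree_qDescPochhammer (hq : q ≠ 0) (j : ℕ) : (qDescPochhammer K q j).degree = j := by
  have hfactor (i : ℕ) : (C (q ^ i)⁻¹ * (X - C (qInt K q i))).degree = 1 := by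
    rw [degree_C_mul (by simpa using pow_ne_zero i hq), degree_X_sub_C]
  simp [qDescPochhammer, degree_prod, hfactor]

lemma eval_qDescPochhammer (hq : q ≠ 0) (j : ℕ) (k : ℤ) :
    (qDescPochhammer K q j).eval (qInt K q k) = ∏ i ∈ Finset.range j, qInt K q (k - i) := by
  simp [qDescPochhammer, eval_prod, qInt_sub hq]

lemma coeff_qDescPochhammer_mem {S : Subring K} (hqS : q ∈ S) (hqinvS : q⁻¹ ∈ S) (j n : ℕ) :
    (qDescPochhammer K q j).coeff n ∈ S := by
  have hC {a : K} (ha : a ∈ S) : C a ∈ liftsRing S.subtype :=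
    (lifts_iff_liftsRing S.subtype _).1 (C'_mem_lifts ⟨⟨a, ha⟩, rfl⟩)
  have hlifts : qDescPochhammer K q j ∈ liftsRing S.subtype := by
    refine Subring.prod_mem _ fun i _ => Subring.mul_mem _ (hC ?_) (Subring.sub_mem _ ?_ (hC ?_))
    · exact inv_pow q i ▸ S.pow_mem hqinvS i
    · exact (lifts_iff_liftsRing S.subtype _).1 (X_mem_lifts _)
    · exact qInt_natCast_mem hqS i
  obtain ⟨s, hs⟩ := (lifts_iff_coeff_lifts _).1 ((lifts_iff_liftsRing S.subtype _).2 hlifts) n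
  exact hs ▸ s.2

end QDescPochhammer

theorem qfactorial_poly_general (K : Type*) [Field K] (q : K) (hq : q ≠ 0) (j : ℕ) :
    ∃ r : K[X], r.degree = (j : ℕ) ∧
      (∀ i : ℕ, r.coeff i ∈ Subring.closure ({q, q⁻¹} : Set K)) ∧
      ∀ k : ℤ, (∏ i ∈ Finset.range j, qInt K q (k - (i : ℤ))) = r.eval (qInt K q k) :=
  ⟨qDescPochhammer K q j, degree_qDescPochhammer hq j,
    coeff_qDescPochhammer_mem (Subring.subset_closure (by simp))
      (Subring.subset_closure (by simp)) j,
    fun k => (eval_qDescPochhammer hq j k).symm⟩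

/-- for every `j ≥ 0` there is a polynomial `r_j` of degree exactly `j`,
with coefficients in the subring generated by `q` and `q⁻¹`, such that
`{k}_q {k−1}_q ⋯ {k−j+1}_q = r_j({k}_q)` for all `k ∈ ℤ`. -/
theorem qfactorial_poly (K : Type*) [Field K] (q : K) (hq : q ≠ 0)
    (hqi : ∀ n : ℤ, n ≠ 0 → qInt K q n ≠ 0) (j : ℕ) :
    ∃ r : K[X], r.degree = (j : ℕ) ∧
      (∀ i : ℕ, r.coeff i ∈ Subring.closure ({q, q⁻¹} : Set K)) ∧
      ∀ k : ℤ, (∏ i ∈ Finset.range j, qInt K q (k - (i : ℤ))) = r.eval (qInt K q k) :=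
  qfactorial_poly_general K q hq j
end
end
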